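/- Let f : ℝ^{n1×n2} → ℝ be differentiable and (L, 2r)-restricted smooth for some L > 0. Let B ∈ ℝ^{n1×r} and R ∈ ℝ^{n2×r}, set X := B Rᵀ, and let λ > 0, η ≥ 0, and D ∈ ℝ^{n1×r} be arbitrary. Then f((B − η D) Rᵀ) ≤ f(X) − η ⟨∇f(X) R, D⟩_F + (η² L / 2) ‖D (RᵀR + λ I_r)^{1/2}‖_F². -/

import Mathlib

/-!
Both `B Rᵀ` and `(B - η D) Rᵀ` have rank at most `r`, so restricted smoothness applies to them;
their difference is `-η D Rᵀ`, whose inner product with `∇f(X)` is `-η ⟨∇f(X) R, D⟩`.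
Writing `S` for the square root of `M = RᵀR + λ I`, we have `‖D S‖² = tr (DᵀD · S Sᵀ) = tr (DᵀD M)
= ‖D Rᵀ‖² + λ ‖D‖²`, so the damping only enlarges the quadratic term.
-/

open Matrix

/-- Frobenius inner product of two real matrices. -/
noncomputable def finner {m n : Type*} [Fintype m] [Fintype n]
    (A B : Matrix m n ℝ) : ℝ := (Aᵀ * B).trace

/-- Frobenius norm of a real matrix. -/
noncomputable def fnorm {m n : Type*} [Fintype m] [Fintype n]
    (A : Matrix m n ℝ) : ℝ := Real.sqrt (finner A A)

open scoped Classical in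
/-- Square root of a positive semidefinite real matrix (junk value `0` otherwise). -/
noncomputable def psqrt {r : ℕ} (M : Matrix (Fin r) (Fin r) ℝ) : Matrix (Fin r) (Fin r) ℝ :=
  if h : M.PosSemidef then
    (h.1.eigenvectorUnitary : Matrix (Fin r) (Fin r) ℝ) *
      diagonal (fun i => Real.sqrt (h.1.eigenvalues i)) *
      (star h.1.eigenvectorUnitary : Matrix (Fin r) (Fin r) ℝ)
  else 0

section Frobenius

variable {m n k : Type*} [Fintype m] [Fintype n] [Fintype k]

lemma finner_self_nonneg (A : Matrix m n ℝ) : 0 ≤ finner A A := by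
  simp only [finner, trace, diag, mul_apply, transpose_apply]
  exact Finset.sum_nonneg fun i _ => Finset.sum_nonneg fun j _ => mul_self_nonneg _

lemma fnorm_sq (A : Matrix m n ℝ) : fnorm A ^ 2 = finner A A :=
  Real.sq_sqrt (finner_self_nonneg A)

lemma finner_smul_right (c : ℝ) (A B : Matrix m n ℝ) : finner A (c • B) = c * finner A B := by
  simp only [finner, Matrix.mul_smul, trace_smul, smul_eq_mul]

lemma fnorm_smul_sq (c : ℝ) (A : Matrix m n ℝ) : fnorm (c • A) ^ 2 = c ^ 2 * fnorm A ^ 2 := by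
  simp only [fnorm_sq, finner, transpose_smul, smul_mul, Matrix.mul_smul, trace_smul, smul_eq_mul]
  ring

lemma finner_mul_transpose_right (G : Matrix m n ℝ) (D : Matrix m k ℝ) (R : Matrix n k ℝ) :
    finner G (D * Rᵀ) = finner (G * R) D := by
  simp only [finner, transpose_mul]
  rw [← Matrix.mul_assoc, trace_mul_comm, Matrix.mul_assoc]

lemma fnorm_mul_sq (A : Matrix m n ℝ) (S : Matrix n k ℝ) :
    fnorm (A * S) ^ 2 = (Aᵀ * A * (S * Sᵀ)).trace := by
  rw [fnorm_sq, finner, transpose_mul, Matrix.mul_assoc, trace_mul_comm]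
  simp only [Matrix.mul_assoc]

end Frobenius

lemma psqrt_eq_cfc {r : ℕ} {M : Matrix (Fin r) (Fin r) ℝ} (hM : M.PosSemidef) :
    psqrt M = cfc Real.sqrt M := by
  rw [psqrt, dif_pos hM, hM.1.cfc_eq, IsHermitian.cfc, Unitary.conjStarAlgAut_apply]
  rfl

lemma psqrt_mul_transpose_self {r : ℕ} {M : Matrix (Fin r) (Fin r) ℝ} (hM : M.PosSemidef) :
    psqrt M * (psqrt M)ᵀ = M := by
  have hspec : ∀ x ∈ spectrum ℝ M, 0 ≤ x := by
    rw [hM.1.spectrum_real_eq_range_eigenvalues]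
    rintro _ ⟨i, rfl⟩
    exact hM.eigenvalues_nonneg i
  have hsymm : (psqrt M)ᵀ = psqrt M := by
    rw [← conjTranspose_eq_transpose_of_trivial, psqrt_eq_cfc hM]
    exact cfc_predicate Real.sqrt M
  rw [hsymm, psqrt_eq_cfc hM, ← cfc_mul Real.sqrt Real.sqrt M]
  conv_rhs => rw [← cfc_id' ℝ M hM.1.isSelfAdjoint]
  exact cfc_congr fun x hx => Real.mul_self_sqrt (hspec x hx)

lemma fnorm_mul_psqrt_gram_add_smul_one_sq {n1 n2 r : ℕ} (D : Matrix (Fin n1) (Fin r) ℝ)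
    (R : Matrix (Fin n2) (Fin r) ℝ) {lam : ℝ} (hlam : 0 ≤ lam) :
    fnorm (D * psqrt (Rᵀ * R + lam • (1 : Matrix (Fin r) (Fin r) ℝ))) ^ 2 =
      fnorm (D * Rᵀ) ^ 2 + lam * fnorm D ^ 2 := by
  have hpsd : (Rᵀ * R + lam • (1 : Matrix (Fin r) (Fin r) ℝ)).PosSemidef := by
    refine .add ?_ (.smul PosSemidef.one hlam)
    simpa using posSemidef_conjTranspose_mul_self R
  rw [fnorm_mul_sq, psqrt_mul_transpose_self hpsd, fnorm_mul_sq, transpose_transpose,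
    fnorm_sq, finner, Matrix.mul_add, trace_add, Matrix.mul_smul, trace_smul, Matrix.mul_one,
    smul_eq_mul]

lemma rank_mul_transpose_le {n1 n2 r : ℕ} (B : Matrix (Fin n1) (Fin r) ℝ)
    (R : Matrix (Fin n2) (Fin r) ℝ) : (B * Rᵀ).rank ≤ r :=
  (rank_mul_le_right B Rᵀ).trans <| (rank_le_card_height Rᵀ).trans_eq (Fintype.card_fin r)

theorem stmt_2_general {n1 n2 r : ℕ}
    (f : Matrix (Fin n1) (Fin n2) ℝ → ℝ)
    (gradf : Matrix (Fin n1) (Fin n2) ℝ → Matrix (Fin n1) (Fin n2) ℝ)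
    (L : ℝ) (hL : 0 < L)
    (hsmooth : ∀ X1 X2 : Matrix (Fin n1) (Fin n2) ℝ, X1.rank ≤ 2 * r → X2.rank ≤ 2 * r →
      f X2 ≤ f X1 + finner (gradf X1) (X2 - X1) + L / 2 * fnorm (X2 - X1) ^ 2)
    (B : Matrix (Fin n1) (Fin r) ℝ) (R : Matrix (Fin n2) (Fin r) ℝ)
    (X : Matrix (Fin n1) (Fin n2) ℝ) (hX : X = B * Rᵀ)
    (lam η : ℝ) (hlam : 0 < lam)
    (D : Matrix (Fin n1) (Fin r) ℝ) :
    f ((B - η • D) * Rᵀ) ≤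
      f X - η * finner (gradf X * R) D +
        η ^ 2 * L / 2 * fnorm (D * psqrt (Rᵀ * R + lam • (1 : Matrix (Fin r) (Fin r) ℝ))) ^ 2 := by
  have hstep : (B - η • D) * Rᵀ - X = (-η) • (D * Rᵀ) := by
    rw [hX, Matrix.sub_mul, smul_mul, neg_smul, sub_sub_cancel_left]
  have hdescent := hsmooth X ((B - η • D) * Rᵀ)
    (hX ▸ (rank_mul_transpose_le B R).trans (by omega))
    ((rank_mul_transpose_le _ R).trans (by omega))
  rw [hstep, finner_smul_right, finner_mul_transpose_right, fnorm_smul_sq] at hdescent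
  rw [fnorm_mul_psqrt_gram_add_smul_one_sq D R hlam.le]
  have hdamping : 0 ≤ η ^ 2 * L / 2 * (lam * fnorm D ^ 2) := by positivity
  linarith

/-- matrix form of the paper's Lemma 3.
Descent inequality for one damped-preconditioned factor update of APGD. -/
theorem stmt_2 {n1 n2 r : ℕ}
    (f : Matrix (Fin n1) (Fin n2) ℝ → ℝ)
    (gradf : Matrix (Fin n1) (Fin n2) ℝ → Matrix (Fin n1) (Fin n2) ℝ)
    (L : ℝ) (hL : 0 < L)
    (hdiff : ∀ X H : Matrix (Fin n1) (Fin n2) ℝ,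
      HasDerivAt (fun t : ℝ => f (X + t • H)) (finner (gradf X) H) 0)
    (hsmooth : ∀ X1 X2 : Matrix (Fin n1) (Fin n2) ℝ, X1.rank ≤ 2 * r → X2.rank ≤ 2 * r →
      f X2 ≤ f X1 + finner (gradf X1) (X2 - X1) + L / 2 * fnorm (X2 - X1) ^ 2)
    (B : Matrix (Fin n1) (Fin r) ℝ) (R : Matrix (Fin n2) (Fin r) ℝ)
    (X : Matrix (Fin n1) (Fin n2) ℝ) (hX : X = B * Rᵀ)
    (lam η : ℝ) (hlam : 0 < lam) (hη : 0 ≤ η)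
    (D : Matrix (Fin n1) (Fin r) ℝ) :
    f ((B - η • D) * Rᵀ) ≤
      f X - η * finner (gradf X * R) D +
        η ^ 2 * L / 2 * fnorm (D * psqrt (Rᵀ * R + lam • (1 : Matrix (Fin r) (Fin r) ℝ))) ^ 2 :=
  stmt_2_general f gradf L hL hsmooth B R X hX lam η hlam D
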